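/- Let 1 ≤ i ≤ s. If (k,b) ∈ C_i⁻ and (a,k) ∈ C_l⁻ for some l < i (with a > k > b), then (a,b) ∈ C_m⁻ for some m < i. -/

import Mathlib

open Finset MvPolynomial

namespace Panov

/-- The set `A` of places `(i,j)` with `n ≥ i > j ≥ 1`. -/
def placesA (n : ℕ) : Finset (ℕ × ℕ) :=
  (Finset.range (n + 1) ×ˢ Finset.range (n + 1)).filter fun p => 1 ≤ p.2 ∧ p.2 < p.1

/-- The rank of a place in the linear order `≻`:
`η ≻ ζ` iff `ordA n η < ordA n ζ`. -/
def ordA (n : ℕ) (p : ℕ × ℕ) : ℕ := p.2 * (n + 1) + (n - p.1)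

/-- The `≻`-greatest element of a (nonempty) set `B` of places:
the element with the minimal value of `ordA`. -/
def xiOf (n : ℕ) (B : Finset (ℕ × ℕ)) : ℕ × ℕ :=
  let m := WithTop.untopD 0 ((B.image (ordA n)).min)
  (n - m % (n + 1), m / (n + 1))

/-- The places that get the symbol `−` at the current step, when the
current set of unfilled places is `B`. -/
def minusSet (n : ℕ) (B : Finset (ℕ × ℕ)) : Finset (ℕ × ℕ) :=
  B.filter fun p =>
    p.1 = (xiOf n B).1 ∧ (xiOf n B).2 < p.2 ∧ p.2 < (xiOf n B).1 ∧ (p.2, (xiOf n B).2) ∈ B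

/-- The places that get the symbol `+` at the current step. -/
def plusSet (n : ℕ) (B : Finset (ℕ × ℕ)) : Finset (ℕ × ℕ) :=
  B.filter fun p =>
    p.2 = (xiOf n B).2 ∧ (xiOf n B).2 < p.1 ∧ p.1 < (xiOf n B).1 ∧ ((xiOf n B).1, p.1) ∈ B

/-- `Bset n M i` is the set of places unfilled after step `i` of the diagram. -/
def Bset (n : ℕ) (M : Finset (ℕ × ℕ)) : ℕ → Finset (ℕ × ℕ)
  | 0 => placesA n \ M
  | i + 1 =>
      Bset n M i \
        insert (xiOf n (Bset n M i)) (minusSet n (Bset n M i) ∪ plusSet n (Bset n M i))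

/-- `ξ_i`, the place that receives `⊗` at step `i ≥ 1`. -/
def xiStep (n : ℕ) (M : Finset (ℕ × ℕ)) (i : ℕ) : ℕ × ℕ := xiOf n (Bset n M (i - 1))

/-- `C_i⁻`, the places filled with `−` at step `i ≥ 1`. -/
def Cminus (n : ℕ) (M : Finset (ℕ × ℕ)) (i : ℕ) : Finset (ℕ × ℕ) :=
  minusSet n (Bset n M (i - 1))

/-- `C_i⁺`, the places filled with `+` at step `i ≥ 1`. -/
def Cplus (n : ℕ) (M : Finset (ℕ × ℕ)) (i : ℕ) : Finset (ℕ × ℕ) :=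
  plusSet n (Bset n M (i - 1))

/-- `M ⊆ A` spans an ideal `𝔪` of `𝔫 = ut(n,K)`. -/
def IsIdealSet (n : ℕ) (M : Finset (ℕ × ℕ)) : Prop :=
  M ⊆ placesA n ∧
    (∀ p ∈ M, ∀ d, 1 ≤ d → d < p.2 → (p.1, d) ∈ M) ∧
    (∀ p ∈ M, ∀ c, p.1 < c → c ≤ n → (c, p.2) ∈ M)

/-- `s` is the number of steps after which the diagram is complete. -/
def IsNumSteps (n : ℕ) (M : Finset (ℕ × ℕ)) (s : ℕ) : Prop :=
  Bset n M s = ∅ ∧ ∀ j < s, (Bset n M j).Nonempty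

/-!
Write `ξ_l = (a, t_l)` and `ξ_i = (k, t_i)`. At step `l` the place `(k, t_l)` gets `+` while
`(k, t_i) = ξ_i` stays unfilled, so `t_l < t_i`; hence `(a, t_i)` and `(a, b)` lie to the right of
`ξ_l ∉ M` in its row and are not in `M` either. Since `(a, t_i) ≻ ξ_i`, it is filled at some step
`y < i`.

The invariant behind the argument is that the unfilled places are transitive modulo `M`. It
implies that when a place `(x, c)` is filled while `(x, y)` and `(y, c)` are unfilled, `(x, y)`
gets `−` or `(y, c)` gets `+` at that step. If `(a, b)` is still unfilled at step `y`, apply this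
to the triangle `(a, b)`, `(b, t_i)`: the place `(b, t_i)` survives until step `i`, so
`(a, b) ∈ C_y⁻`. Otherwise `(a, b)` was filled earlier while `(a, t_i)`, to its left in the same
row, was still unfilled, and only a `−` can be placed then.
-/

section Diagram

variable {n : ℕ}

theorem mem_placesA {p : ℕ × ℕ} : p ∈ placesA n ↔ p.1 ≤ n ∧ 1 ≤ p.2 ∧ p.2 < p.1 := by
  simp only [placesA, mem_filter, mem_product, mem_range]
  omega

theorem ordA_lt_of_snd_lt {p q : ℕ × ℕ} (hp : p.1 ≤ n) (h : p.2 < q.2) :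
    ordA n p < ordA n q := by
  have : (p.2 + 1) * (n + 1) ≤ q.2 * (n + 1) := Nat.mul_le_mul_right _ h
  unfold ordA
  rw [add_one_mul] at this
  omega

theorem ordA_lt_of_fst_lt {x y t : ℕ} (hx : x ≤ n) (h : y < x) : ordA n (x, t) < ordA n (y, t) := by
  simp only [ordA]
  omega

theorem ordA_decode {p : ℕ × ℕ} (hp : p.1 ≤ n) :
    (n - ordA n p % (n + 1), ordA n p / (n + 1)) = p := by
  have hlt : n - p.1 < n + 1 := by omega
  have hmod : ordA n p % (n + 1) = n - p.1 := by
    rw [ordA, mul_comm, Nat.mul_add_mod, Nat.mod_eq_of_lt hlt]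
  have hdiv : ordA n p / (n + 1) = p.2 := by
    rw [ordA, mul_comm, Nat.mul_add_div (Nat.succ_pos n), Nat.div_eq_of_lt hlt, add_zero]
  rw [hmod, hdiv]
  ext
  · simp only; omega
  · rfl

theorem xiOf_eq_of_forall_le {B : Finset (ℕ × ℕ)} {p : ℕ × ℕ} (hpn : p.1 ≤ n) (hp : p ∈ B)
    (hmin : ∀ q ∈ B, ordA n p ≤ ordA n q) : xiOf n B = p := by
  have hB : (B.image (ordA n)).min = ordA n p :=
    le_antisymm (Finset.min_le (mem_image_of_mem _ hp)) (Finset.le_min <| by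
      simp only [mem_image, forall_exists_index, and_imp, forall_apply_eq_imp_iff₂]
      exact fun q hq => WithTop.coe_le_coe.2 (hmin q hq))
  simp only [xiOf, hB]
  exact ordA_decode hpn

variable {M B : Finset (ℕ × ℕ)}

theorem xiOf_mem (hB : B ⊆ placesA n) (hne : B.Nonempty) : xiOf n B ∈ B := by
  obtain ⟨p, hp, hmin⟩ := B.exists_min_image (ordA n) hne
  rwa [xiOf_eq_of_forall_le (mem_placesA.1 (hB hp)).1 hp hmin]

theorem ordA_xiOf_le (hB : B ⊆ placesA n) {q : ℕ × ℕ} (hq : q ∈ B) :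
    ordA n (xiOf n B) ≤ ordA n q := by
  obtain ⟨p, hp, hmin⟩ := B.exists_min_image (ordA n) ⟨q, hq⟩
  rw [xiOf_eq_of_forall_le (mem_placesA.1 (hB hp)).1 hp hmin]
  exact hmin q hq

theorem snd_xiOf_le (hB : B ⊆ placesA n) {q : ℕ × ℕ} (hq : q ∈ B) : (xiOf n B).2 ≤ q.2 := by
  by_contra! h
  have := ordA_lt_of_snd_lt (mem_placesA.1 (hB hq)).1 h
  have := ordA_xiOf_le hB hq
  omega

theorem mem_minusSet_iff {x y : ℕ} : (x, y) ∈ minusSet n B ↔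
    ∃ t, xiOf n B = (x, t) ∧ t < y ∧ y < x ∧ (x, y) ∈ B ∧ (y, t) ∈ B := by
  simp only [minusSet, mem_filter]
  constructor
  · rintro ⟨hxy, hx, hty, hyx, hyt⟩
    exact ⟨_, Prod.ext hx.symm rfl, hty, hx ▸ hyx, hxy, hyt⟩
  · rintro ⟨t, hξ, hty, hyx, hxy, hyt⟩
    rw [hξ]
    exact ⟨hxy, rfl, hty, hyx, hyt⟩

theorem mem_plusSet_iff {y t : ℕ} : (y, t) ∈ plusSet n B ↔
    ∃ x, xiOf n B = (x, t) ∧ t < y ∧ y < x ∧ (y, t) ∈ B ∧ (x, y) ∈ B := by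
  simp only [plusSet, mem_filter]
  constructor
  · rintro ⟨hyt, ht, hty, hyx, hxy⟩
    exact ⟨_, Prod.ext rfl ht.symm, ht ▸ hty, hyx, hyt, hxy⟩
  · rintro ⟨x, hξ, hty, hyx, hyt, hxy⟩
    rw [hξ]
    exact ⟨hyt, rfl, hty, hyx, hxy⟩

def fillStep (n : ℕ) (B : Finset (ℕ × ℕ)) : Finset (ℕ × ℕ) :=
  B \ insert (xiOf n B) (minusSet n B ∪ plusSet n B)

theorem fillStep_subset : fillStep n B ⊆ B := sdiff_subset

theorem mem_fillStep {p : ℕ × ℕ} :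
    p ∈ fillStep n B ↔ p ∈ B ∧ p ≠ xiOf n B ∧ p ∉ minusSet n B ∧ p ∉ plusSet n B := by
  simp only [fillStep, mem_sdiff, mem_insert, mem_union, not_or]

theorem eq_xiOf_or_mem_minusSet_or_mem_plusSet {p : ℕ × ℕ} (hp : p ∈ B) (hp' : p ∉ fillStep n B) :
    p = xiOf n B ∨ p ∈ minusSet n B ∨ p ∈ plusSet n B := by
  simp only [mem_fillStep, hp, true_and, not_and_or, not_not, ne_eq] at hp'
  exact hp'

theorem mem_minusSet_of_removed_of_mem_left (hB : B ⊆ placesA n) {x b c : ℕ} (hxb : (x, b) ∈ B)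
    (hrem : (x, b) ∉ fillStep n B) (hxc : (x, c) ∈ B) (hcb : c < b) :
    (x, b) ∈ minusSet n B := by
  have hξc := snd_xiOf_le hB hxc
  rcases eq_xiOf_or_mem_minusSet_or_mem_plusSet hxb hrem with hξ | hminus | hplus
  · rw [← hξ] at hξc
    exact absurd hξc (by simpa using hcb)
  · exact hminus
  · obtain ⟨f, hξ, -⟩ := mem_plusSet_iff.1 hplus
    rw [hξ] at hξc
    exact absurd hξc (by simpa using hcb)

theorem snd_xiOf_lt_of_mem_minusSet (hB : B ⊆ placesA n) {a k t : ℕ} (hak : (a, k) ∈ minusSet n B)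
    (hkt : (k, t) ∈ fillStep n B) : (xiOf n B).2 < t := by
  obtain ⟨t₀, hξ, ht₀k, hka, haB, hkB⟩ := mem_minusSet_iff.1 hak
  have hplus : (k, t₀) ∈ plusSet n B := mem_plusSet_iff.2 ⟨a, hξ, ht₀k, hka, hkB, haB⟩
  have hle := snd_xiOf_le hB (fillStep_subset hkt)
  rw [hξ] at hle ⊢
  rcases hle.lt_or_eq with h | rfl
  · exact h
  · exact absurd hplus (mem_fillStep.1 hkt).2.2.2

def IsTransitiveMod (M B : Finset (ℕ × ℕ)) : Prop :=
  ∀ ⦃x y z : ℕ⦄, (x, y) ∈ B → (y, z) ∈ B → (x, z) ∈ B ∨ (x, z) ∈ M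

theorem mem_minusSet_or_mem_plusSet_of_removed (hM : IsIdealSet n M) (hB : B ⊆ placesA n \ M)
    (hBt : IsTransitiveMod M B) {x y c : ℕ} (hxc : (x, c) ∈ B) (hrem : (x, c) ∉ fillStep n B)
    (hxy : (x, y) ∈ B) (hyc : (y, c) ∈ B) :
    (x, y) ∈ minusSet n B ∨ (y, c) ∈ plusSet n B := by
  have hξM : xiOf n B ∉ M :=
    (mem_sdiff.1 (hB (xiOf_mem (fun _ hp => (mem_sdiff.1 (hB hp)).1) ⟨_, hxc⟩))).2
  obtain ⟨hxn, -, hyx⟩ := mem_placesA.1 (mem_sdiff.1 (hB hxy)).1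
  obtain ⟨-, hc1, hcy⟩ := mem_placesA.1 (mem_sdiff.1 (hB hyc)).1
  rcases eq_xiOf_or_mem_minusSet_or_mem_plusSet hxc hrem with hξ | hminus | hplus
  · exact Or.inl (mem_minusSet_iff.2 ⟨c, hξ.symm, hcy, hyx, hxy, hyc⟩)
  · obtain ⟨g, hξ, hgc, -, -, hcg⟩ := mem_minusSet_iff.1 hminus
    refine Or.inl (mem_minusSet_iff.2 ⟨g, hξ, by omega, hyx, hxy, ?_⟩)
    refine (hBt hyc hcg).resolve_right fun hyg => hξM ?_
    rw [hξ]
    exact hM.2.2 _ hyg x hyx hxn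
  · obtain ⟨f, hξ, -, hxf, -, hfx⟩ := mem_plusSet_iff.1 hplus
    refine Or.inr (mem_plusSet_iff.2 ⟨f, hξ, hcy, by omega, hyc, ?_⟩)
    refine (hBt hfx hxy).resolve_right fun hfy => hξM ?_
    rw [hξ]
    exact hM.2.1 _ hfy c hc1 hcy

theorem isTransitiveMod_fillStep (hM : IsIdealSet n M) (hB : B ⊆ placesA n \ M)
    (hBt : IsTransitiveMod M B) : IsTransitiveMod M (fillStep n B) := by
  intro x y z hxy hyz
  rw [mem_fillStep] at hxy hyz
  refine (hBt hxy.1 hyz.1).imp_left fun hxz => ?_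
  by_contra hrem
  rcases mem_minusSet_or_mem_plusSet_of_removed hM hB hBt hxz hrem hxy.1 hyz.1 with h | h
  · exact hxy.2.2.1 h
  · exact hyz.2.2.2 h

theorem Bset_succ (m : ℕ) : Bset n M (m + 1) = fillStep n (Bset n M m) := rfl

theorem Bset_antitone : Antitone (Bset n M) :=
  antitone_nat_of_succ_le fun _ => fillStep_subset

theorem Bset_subset_sdiff (m : ℕ) : Bset n M m ⊆ placesA n \ M :=
  Bset_antitone (Nat.zero_le m)

theorem Bset_subset_placesA (m : ℕ) : Bset n M m ⊆ placesA n :=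
  (Bset_subset_sdiff m).trans sdiff_subset

theorem isTransitiveMod_Bset (hM : IsIdealSet n M) : ∀ m, IsTransitiveMod M (Bset n M m)
  | 0 => by
    intro x y z hxy hyz
    obtain ⟨hxn, -, hyx⟩ := mem_placesA.1 (mem_sdiff.1 hxy).1
    obtain ⟨-, hz1, hzy⟩ := mem_placesA.1 (mem_sdiff.1 hyz).1
    by_cases hxz : (x, z) ∈ M
    · exact Or.inr hxz
    · exact Or.inl (mem_sdiff.2 ⟨mem_placesA.2 ⟨hxn, hz1, by omega⟩, hxz⟩)
  | m + 1 => isTransitiveMod_fillStep hM (Bset_subset_sdiff m) (isTransitiveMod_Bset hM m)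

theorem exists_removal_step {p : ℕ × ℕ} {m₁ : ℕ} :
    ∀ {m₂ : ℕ}, p ∈ Bset n M m₁ → p ∉ Bset n M m₂ →
      ∃ y, m₁ ≤ y ∧ y < m₂ ∧ p ∈ Bset n M y ∧ p ∉ Bset n M (y + 1)
  | 0, h₁, h₂ => absurd (Bset_antitone (Nat.zero_le m₁) h₁) h₂
  | m₂ + 1, h₁, h₂ => by
    by_cases hp : p ∈ Bset n M m₂
    · have : m₁ ≤ m₂ := by
        by_contra hlt
        exact h₂ (Bset_antitone (by omega) h₁)
      exact ⟨m₂, this, by omega, hp, h₂⟩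
    · obtain ⟨y, hy₁, hy₂, hy⟩ := exists_removal_step h₁ hp
      exact ⟨y, hy₁, by omega, hy⟩

theorem mem_Bset_zero_of_mem_of_lt (hM : IsIdealSet n M) {x t c m : ℕ} (hxt : (x, t) ∈ Bset n M m)
    (htc : t < c) (hcx : c < x) : (x, c) ∈ Bset n M 0 := by
  obtain ⟨hxtA, hxtM⟩ := mem_sdiff.1 (Bset_subset_sdiff m hxt)
  obtain ⟨hxn, ht1, -⟩ := mem_placesA.1 hxtA
  exact mem_sdiff.2 ⟨mem_placesA.2 ⟨hxn, by omega, hcx⟩, fun h => hxtM (hM.2.1 _ h t ht1 htc)⟩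

end Diagram

theorem lemma2_point1_general (n : ℕ) (M : Finset (ℕ × ℕ))
    (hM : IsIdealSet n M)
    (i l : ℕ) (hl1 : 1 ≤ l) (hli : l < i)
    (k a b : ℕ)
    (h1 : (k, b) ∈ Cminus n M i) (h2 : (a, k) ∈ Cminus n M l) :
    ∃ m, 1 ≤ m ∧ m < i ∧ (a, b) ∈ Cminus n M m := by
  obtain ⟨ti, hξi, htib, hbk, hkbB, hbtB⟩ := mem_minusSet_iff.1 h1
  obtain ⟨tl, hξl, -, hka, hakB, -⟩ := mem_minusSet_iff.1 h2
  obtain ⟨han, -, -⟩ := mem_placesA.1 (Bset_subset_placesA _ hakB)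
  have hatl : (a, tl) ∈ Bset n M (l - 1) := hξl ▸ xiOf_mem (Bset_subset_placesA _) ⟨_, hakB⟩
  have htlti : tl < ti := by
    have hkti : (k, ti) ∈ Bset n M (l - 1 + 1) :=
      Bset_antitone (by omega) (hξi ▸ xiOf_mem (Bset_subset_placesA _) ⟨_, hkbB⟩)
    simpa [hξl] using snd_xiOf_lt_of_mem_minusSet (Bset_subset_placesA _) h2 hkti
  have hati : (a, ti) ∉ Bset n M (i - 1) := fun h => by
    have := ordA_xiOf_le (Bset_subset_placesA _) h
    rw [hξi] at this
    exact absurd this (not_le.2 (ordA_lt_of_fst_lt han hka))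
  obtain ⟨y, -, hyi, haty, haty'⟩ :=
    exists_removal_step (mem_Bset_zero_of_mem_of_lt hM hatl htlti (by omega)) hati
  by_cases haby : (a, b) ∈ Bset n M y
  · have hbty : (b, ti) ∈ Bset n M (y + 1) := Bset_antitone (by omega) hbtB
    rw [Bset_succ] at hbty
    refine ⟨y + 1, by omega, by omega, ?_⟩
    exact (mem_minusSet_or_mem_plusSet_of_removed hM (Bset_subset_sdiff y)
      (isTransitiveMod_Bset hM y) haty haty' haby (fillStep_subset hbty)).resolve_right (mem_fillStep.1 hbty).2.2.2
  · obtain ⟨w, -, hwy, habw, habw'⟩ :=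
      exists_removal_step (mem_Bset_zero_of_mem_of_lt hM hatl (by omega) (by omega)) haby
    exact ⟨w + 1, by omega, by omega, mem_minusSet_of_removed_of_mem_left (Bset_subset_placesA w)
      habw habw' (Bset_antitone (by omega) haty) htib⟩

/-- **Lemma 2, point 1.**  If `(k,b) ∈ C_i⁻` and `(a,k) ∈ C_l⁻` for some `l < i`
(with `a > k > b`), then `(a,b) ∈ C_m⁻` for some `m < i`. -/
theorem lemma2_point1 (K : Type*) [Field K] [CharZero K]
    (n s : ℕ) (hn : 2 ≤ n) (M : Finset (ℕ × ℕ))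
    (hM : IsIdealSet n M) (hs : IsNumSteps n M s)
    (i l : ℕ) (hi1 : 1 ≤ i) (his : i ≤ s) (hl1 : 1 ≤ l) (hli : l < i)
    (k a b : ℕ) (hak : a > k) (hkb : k > b)
    (h1 : (k, b) ∈ Cminus n M i) (h2 : (a, k) ∈ Cminus n M l) :
    ∃ m, 1 ≤ m ∧ m < i ∧ (a, b) ∈ Cminus n M m :=
  lemma2_point1_general n M hM i l hl1 hli k a b h1 h2

end Panov
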